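/- For n ≥ 2, irrational α, and h ∈ BS(1,n), the conjugate of the Smirnov positive cone satisfies h P_α h⁻¹ = P_{ρ(h)(α)}. Consequently, since every non-identity element of ρ(BS(1,n)) has only rational fixed points and α ↦ P_α is injective on irrationals, h P_α h⁻¹ = P_α implies h = 1; i.e., P_α lies in the free part of the conjugation action. -/

import Mathlib

/-- The single relator `b a b⁻¹ a⁻ⁿ` of the Baumslag–Solitar group `BS(1,n)`, with
generators indexed by `Bool` (`false ↦ a`, `true ↦ b`). -/
def BSRels (n : ℕ) : Set (FreeGroup Bool) :=
  {FreeGroup.of true * FreeGroup.of false * (FreeGroup.of true)⁻¹ * (FreeGroup.of false ^ n)⁻¹}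

/-- The Baumslag–Solitar group `BS(1,n) = ⟨a, b ∣ b a b⁻¹ = aⁿ⟩`. -/
abbrev BS (n : ℕ) := PresentedGroup (BSRels n)

/-- The generator `a` of `BS(1,n)`. -/
def BSa (n : ℕ) : BS n := PresentedGroup.of false

/-- The generator `b` of `BS(1,n)`. -/
def BSb (n : ℕ) : BS n := PresentedGroup.of true

/-!
Every element of `BS(1,n)` can be written `b⁻ⁱ aᵐ bʲ`, so `ρ` acts by increasing affine maps
`x ↦ (nʲ x + m) / nⁱ`; monotonicity of `ρ h` gives the conjugation formula. If `h` stabilises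
`P_α`, then `P_{ρ(h)(α)} = P_α`. The maps `x ↦ n x - r (n - 1) / nⁱ` move points up exactly to the
right of their fixed point `r / nⁱ`, and these fixed points are dense, so `ρ(h)(α) = α`. Finally an
affine map `x ↦ (nʲ x + m) / nⁱ` fixing an irrational point has `i = j` and `m = 0`, so `h = 1`.
-/

theorem setOf_lt_apply_conj_eq {G X : Type*} [Group G] [LinearOrder X] (ρ : G →* Equiv.Perm X)
    {h : G} (hh : StrictMono (ρ h)) (x : X) :
    {g : G | x < ρ (h⁻¹ * g * h) x} = {g | ρ h x < ρ g (ρ h x)} := by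
  ext g
  simp only [Set.mem_ofPred_eq, map_mul, map_inv, Equiv.Perm.mul_apply]
  rw [← hh.lt_iff_lt, Equiv.Perm.coe_inv, Equiv.apply_symm_apply]

theorem exists_int_btwn_pow_mul {b u v : ℝ} (hb : 1 < b) (huv : u < v) :
    ∃ (i : ℕ) (r : ℤ), b ^ i * u < r ∧ r < b ^ i * v := by
  obtain ⟨i, hi⟩ := pow_unbounded_of_one_lt (v - u)⁻¹ hb
  rw [inv_lt_iff_one_lt_mul₀ (sub_pos.2 huv)] at hi
  refine ⟨i, ⌊b ^ i * u⌋ + 1, by push_cast; exact Int.lt_floor_add_one _, ?_⟩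
  push_cast
  linarith [Int.floor_le (b ^ i * u)]

namespace BS

variable {n : ℕ}

theorem b_mul_a_mul_b_inv : BSb n * BSa n * (BSb n)⁻¹ = BSa n ^ n := by
  have hrel : PresentedGroup.mk (BSRels n) (FreeGroup.of true * FreeGroup.of false *
      (FreeGroup.of true)⁻¹ * (FreeGroup.of false ^ n)⁻¹) = 1 :=
    (QuotientGroup.eq_one_iff _).2 (Subgroup.subset_normalClosure rfl)
  rw [map_mul, map_mul, map_inv, map_inv, map_pow] at hrel
  exact mul_inv_eq_one.mp hrel

theorem b_mul_a_zpow_mul_b_inv (m : ℤ) : BSb n * BSa n ^ m * (BSb n)⁻¹ = BSa n ^ (m * n) := by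
  rw [← conj_zpow, b_mul_a_mul_b_inv, ← zpow_natCast, ← zpow_mul, mul_comm]

theorem b_pow_mul_a_zpow_mul_b_pow_inv (k : ℕ) (m : ℤ) :
    BSb n ^ k * BSa n ^ m * (BSb n ^ k)⁻¹ = BSa n ^ (m * n ^ k) := by
  induction k generalizing m with
  | zero => simp
  | succ k ih =>
    calc BSb n ^ (k + 1) * BSa n ^ m * (BSb n ^ (k + 1))⁻¹
        = BSb n ^ k * (BSb n * BSa n ^ m * (BSb n)⁻¹) * (BSb n ^ k)⁻¹ := by group
      _ = BSa n ^ (m * n ^ (k + 1)) := by rw [b_mul_a_zpow_mul_b_inv, ih]; ring_nf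

theorem a_zpow_mul_b_pow_inv (k : ℕ) (m : ℤ) :
    BSa n ^ m * (BSb n ^ k)⁻¹ = (BSb n ^ k)⁻¹ * BSa n ^ (m * n ^ k) := by
  rw [← b_pow_mul_a_zpow_mul_b_pow_inv]; group

theorem b_mul_a_zpow (m : ℤ) : BSb n * BSa n ^ m = BSa n ^ (m * n) * BSb n := by
  rw [← b_mul_a_zpow_mul_b_inv]; group

theorem closure_a_b : Subgroup.closure {BSa n, BSb n} = ⊤ := by
  rw [← PresentedGroup.closure_range_of]
  congr 1
  ext
  simp [BSa, BSb]

theorem exists_eq_inv_b_pow_mul_a_zpow_mul_b_pow (h : BS n) :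
    ∃ (i j : ℕ) (m : ℤ), h = (BSb n ^ i)⁻¹ * BSa n ^ m * BSb n ^ j := by
  induction (closure_a_b (n := n) ▸ Subgroup.mem_top h : h ∈ _)
    using Subgroup.closure_induction_left with
  | one => exact ⟨0, 0, 0, by simp⟩
  | mul_left x hx y _ ih =>
    obtain ⟨i, j, m, rfl⟩ := ih
    rcases hx with rfl | rfl
    · have key := a_zpow_mul_b_pow_inv (n := n) i 1
      rw [zpow_one, one_mul] at key
      exact ⟨i, j, n ^ i + m, by rw [zpow_add]; simp only [← mul_assoc, key]⟩
    · cases i with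
      | zero => exact ⟨0, j + 1, m * n, by simp [← mul_assoc, b_mul_a_zpow, pow_succ']⟩
      | succ i => exact ⟨i, j, m, by rw [pow_succ']; group⟩
  | inv_mul_cancel x hx y _ ih =>
    obtain ⟨i, j, m, rfl⟩ := ih
    rcases hx with rfl | rfl
    · have key := a_zpow_mul_b_pow_inv (n := n) i (-1)
      rw [zpow_neg_one, neg_one_mul] at key
      exact ⟨i, j, -n ^ i + m, by rw [zpow_add]; simp only [← mul_assoc, key]⟩
    · exact ⟨i + 1, j, m, by simp [pow_succ, mul_assoc]⟩

variable {ρ : BS n →* Equiv.Perm ℝ}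

theorem apply_a_zpow (hρa : ∀ x, ρ (BSa n) x = x + 1) (m : ℤ) (x : ℝ) :
    ρ (BSa n ^ m) x = x + m := by
  rw [map_zpow, show ρ (BSa n) = Equiv.addRight 1 from Equiv.ext hρa, Equiv.zsmul_addRight]
  simp

theorem apply_b_pow (hρb : ∀ x, ρ (BSb n) x = n * x) (k : ℕ) (x : ℝ) :
    ρ (BSb n ^ k) x = n ^ k * x := by
  induction k generalizing x with
  | zero => simp
  | succ k ih => rw [pow_succ, map_mul, Equiv.Perm.mul_apply, hρb, ih, pow_succ, mul_assoc]

theorem apply_inv_b_pow (hn : 0 < n) (hρb : ∀ x, ρ (BSb n) x = n * x) (k : ℕ) (x : ℝ) :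
    ρ (BSb n ^ k)⁻¹ x = x / n ^ k := by
  rw [map_inv, Equiv.Perm.inv_eq_iff_eq, apply_b_pow hρb]
  field_simp

theorem apply_inv_b_pow_mul_a_zpow_mul_b_pow (hn : 0 < n) (hρa : ∀ x, ρ (BSa n) x = x + 1)
    (hρb : ∀ x, ρ (BSb n) x = n * x) (i j : ℕ) (m : ℤ) (x : ℝ) :
    ρ ((BSb n ^ i)⁻¹ * BSa n ^ m * BSb n ^ j) x = (n ^ j * x + m) / n ^ i := by
  simp only [map_mul, Equiv.Perm.mul_apply, apply_b_pow hρb, apply_a_zpow hρa,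
    apply_inv_b_pow hn hρb]

theorem strictMono_apply (hn : 0 < n) (hρa : ∀ x, ρ (BSa n) x = x + 1)
    (hρb : ∀ x, ρ (BSb n) x = n * x) (h : BS n) : StrictMono (ρ h) := by
  obtain ⟨i, j, m, rfl⟩ := exists_eq_inv_b_pow_mul_a_zpow_mul_b_pow h
  intro x y hxy
  simp only [apply_inv_b_pow_mul_a_zpow_mul_b_pow hn hρa hρb]
  gcongr

theorem exists_lt_apply_and_not_lt_apply (hn : 2 ≤ n) (hρa : ∀ x, ρ (BSa n) x = x + 1)
    (hρb : ∀ x, ρ (BSb n) x = n * x) {x y : ℝ} (hxy : x < y) :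
    ∃ g : BS n, y < ρ g y ∧ ¬ x < ρ g x := by
  have hn1 : (1 : ℝ) < n := by exact_mod_cast hn
  obtain ⟨i, r, hxr, hry⟩ := exists_int_btwn_pow_mul hn1 hxy
  have hg (z : ℝ) : z < ρ ((BSb n ^ i)⁻¹ * BSa n ^ (-(r * (n - 1))) * BSb n ^ (i + 1)) z ↔
      (r : ℝ) < n ^ i * z := by
    rw [apply_inv_b_pow_mul_a_zpow_mul_b_pow (by omega) hρa hρb, lt_div_iff₀ (by positivity),
      pow_succ]
    push_cast
    constructor <;> intro <;> nlinarith [pow_pos (zero_lt_one.trans hn1) i]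
  exact ⟨_, (hg y).2 hry, fun hx => (hg x).1 hx |>.not_gt hxr⟩

theorem eq_of_setOf_lt_apply_eq (hn : 2 ≤ n) (hρa : ∀ x, ρ (BSa n) x = x + 1)
    (hρb : ∀ x, ρ (BSb n) x = n * x) {x y : ℝ}
    (hxy : {g : BS n | x < ρ g x} = {g | y < ρ g y}) : x = y := by
  rcases lt_trichotomy x y with hlt | heq | hgt
  · obtain ⟨g, hy, hx⟩ := exists_lt_apply_and_not_lt_apply hn hρa hρb hlt
    exact absurd ((Set.ext_iff.1 hxy g).2 hy) hx
  · exact heq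
  · obtain ⟨g, hx, hy⟩ := exists_lt_apply_and_not_lt_apply hn hρa hρb hgt
    exact absurd ((Set.ext_iff.1 hxy g).1 hx) hy

theorem eq_one_of_apply_eq_self (hn : 2 ≤ n) (hρa : ∀ x, ρ (BSa n) x = x + 1)
    (hρb : ∀ x, ρ (BSb n) x = n * x) {x : ℝ} (hx : Irrational x) {h : BS n}
    (hfix : ρ h x = x) : h = 1 := by
  obtain ⟨i, j, m, rfl⟩ := exists_eq_inv_b_pow_mul_a_zpow_mul_b_pow h
  rw [apply_inv_b_pow_mul_a_zpow_mul_b_pow (by omega) hρa hρb, div_eq_iff (by positivity)] at hfix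
  have hk : ((n ^ i - n ^ j : ℤ) : ℝ) * x = m := by push_cast; linarith
  have hij : i = j := by
    by_contra hij
    have hk0 : (n ^ i - n ^ j : ℤ) ≠ 0 := by
      rw [sub_ne_zero]
      exact_mod_cast (Nat.pow_right_injective hn).ne hij
    exact (hx.intCast_mul hk0).ne_int m hk
  subst hij
  have hm : m = 0 := by exact_mod_cast (by simpa using hk.symm : (m : ℝ) = 0)
  simp [hm]

end BS

/-- For `n ≥ 2`, irrational `α`, and `h ∈ BS(1,n)`, the conjugate of the
Smirnov cone satisfies `h P_α h⁻¹ = P_{ρ(h)(α)}` (note `g ∈ h P_α h⁻¹ ↔ h⁻¹gh ∈ P_α`);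
consequently `h P_α h⁻¹ = P_α` implies `h = 1`, i.e. `P_α` lies in the free part of the
conjugation action. -/
theorem smirnov_free_part (n : ℕ) (hn : 2 ≤ n) (A B : Equiv.Perm ℝ)
    (hA : ∀ x, A x = x + 1) (hB : ∀ x, B x = n * x)
    (ρ : BS n →* Equiv.Perm ℝ) (hρa : ρ (BSa n) = A) (hρb : ρ (BSb n) = B)
    (α : ℝ) (hα : Irrational α) (h : BS n) :
    ({g : BS n | α < ρ (h⁻¹ * g * h) α} = {g : BS n | ρ h α < ρ g (ρ h α)}) ∧
    ({g : BS n | α < ρ (h⁻¹ * g * h) α} = {g : BS n | α < ρ g α} → h = 1) := by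
  subst hρa hρb
  have hconj := setOf_lt_apply_conj_eq ρ (BS.strictMono_apply (by omega) hA hB h) α
  refine ⟨hconj, fun hstab => ?_⟩
  rw [hconj] at hstab
  exact BS.eq_one_of_apply_eq_self hn hA hB hα (BS.eq_of_setOf_lt_apply_eq hn hA hB hstab)
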